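/- Let 1 ≤ k < n and let an n-player cake-cutting instance be in class X(k). Then every envy-free contiguous allocation whose utilitarian welfare is maximal among all envy-free contiguous allocations of the instance has utilitarian welfare at least n/(k+2). -/

import Mathlib

open MeasureTheory Set

/-- An `n`-player cake-cutting instance: continuous nonnegative density functions
on `[0,1]`, each of total integral `1`. -/
structure CakeInstance (n : ℕ) where
  d : Fin n → ℝ → ℝ
  cont : ∀ i, ContinuousOn (d i) (Set.Icc 0 1)
  nonneg : ∀ i, ∀ x ∈ Set.Icc (0:ℝ) 1, 0 ≤ d i x
  total : ∀ i, ∫ x in (0:ℝ)..1, d i x = 1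

namespace CakeInstance

/-- Value of player `i` for the interval `[a,b]`. -/
noncomputable def ival {n : ℕ} (C : CakeInstance n) (i : Fin n) (a b : ℝ) : ℝ :=
  ∫ x in a..b, C.d i x

/-- Value of player `i` for a set `S`. -/
noncomputable def sval {n : ℕ} (C : CakeInstance n) (i : Fin n) (S : Set ℝ) : ℝ :=
  ∫ x in S, C.d i x

end CakeInstance

/-- A contiguous allocation: weakly increasing cut points `x 0 = 0 ≤ … ≤ x n = 1`
together with a permutation `σ` assigning the `j`-th interval `[x j, x (j+1)]`
to player `σ j`. -/
structure ContigAlloc (n : ℕ) where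
  x : Fin (n+1) → ℝ
  mono : Monotone x
  first : x 0 = 0
  last : x (Fin.last n) = 1
  σ : Equiv.Perm (Fin n)

/-- The (closed) interval received by player `i` in a contiguous allocation. -/
def cpiece {n : ℕ} (A : ContigAlloc n) (i : Fin n) : Set ℝ :=
  Set.Icc (A.x (A.σ.symm i).castSucc) (A.x (A.σ.symm i).succ)

/-- Value of player `i` for the interval received by player `j`. -/
noncomputable def cval {n : ℕ} (C : CakeInstance n) (A : ContigAlloc n) (i j : Fin n) : ℝ :=
  C.ival i (A.x (A.σ.symm j).castSucc) (A.x (A.σ.symm j).succ)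

/-- Utilitarian welfare of a contiguous allocation. -/
noncomputable def cWelfare {n : ℕ} (C : CakeInstance n) (A : ContigAlloc n) : ℝ :=
  ∑ i, cval C A i i

/-- Egalitarian welfare of a contiguous allocation. -/
noncomputable def cEgal {n : ℕ} (C : CakeInstance n) (A : ContigAlloc n) : ℝ :=
  ⨅ i, cval C A i i

/-- A contiguous allocation is envy-free if nobody prefers another player's interval. -/
def cEnvyFree {n : ℕ} (C : CakeInstance n) (A : ContigAlloc n) : Prop :=
  ∀ i j, cval C A i j ≤ cval C A i i

/-- A `k`-piece allocation: each player `i` receives the union of (at most) `k`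
closed intervals `[lo i m, hi i m] ⊆ [0,1]` (possibly degenerate); all these
intervals are pairwise non-overlapping and together they cover `[0,1]`. -/
structure KPieceAlloc (n k : ℕ) where
  lo : Fin n → Fin k → ℝ
  hi : Fin n → Fin k → ℝ
  le : ∀ i m, lo i m ≤ hi i m
  sub : ∀ i m, Set.Icc (lo i m) (hi i m) ⊆ Set.Icc (0:ℝ) 1
  nonoverlap : ∀ i m i' m', (i, m) ≠ (i', m') →
      Set.Ioo (lo i m) (hi i m) ∩ Set.Ioo (lo i' m') (hi i' m') = ∅
  cover : (⋃ i, ⋃ m, Set.Icc (lo i m) (hi i m)) = Set.Icc (0:ℝ) 1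

/-- Value of player `i` for the portion received by player `j` in a `k`-piece allocation. -/
noncomputable def kval {n k : ℕ} (C : CakeInstance n) (A : KPieceAlloc n k) (i j : Fin n) : ℝ :=
  ∑ m, C.ival i (A.lo j m) (A.hi j m)

/-- Utilitarian welfare of a `k`-piece allocation. -/
noncomputable def kWelfare {n k : ℕ} (C : CakeInstance n) (A : KPieceAlloc n k) : ℝ :=
  ∑ i, kval C A i i

/-- Egalitarian welfare of a `k`-piece allocation. -/
noncomputable def kEgal {n k : ℕ} (C : CakeInstance n) (A : KPieceAlloc n k) : ℝ :=
  ⨅ i, kval C A i i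

/-- A `k`-piece allocation is envy-free if nobody prefers another player's portion. -/
def kEnvyFree {n k : ℕ} (C : CakeInstance n) (A : KPieceAlloc n k) : Prop :=
  ∀ i j, kval C A i j ≤ kval C A i i

/-- A witness that an `n`-player cake-cutting instance lies in the class `X(k)`:
cut points `0 = c 0 < c 1 < … < c (n*k) = 1` and an ownership map under which each
player owns exactly `k` of the pieces `[c j, c (j+1)]` and values the unowned pieces `0`. -/
structure XkWitness {n : ℕ} (C : CakeInstance n) (k : ℕ) where
  c : Fin (n*k+1) → ℝ
  mono : StrictMono c
  first : c 0 = 0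
  last : c (Fin.last (n*k)) = 1
  owner : Fin (n*k) → Fin n
  ownCount : ∀ i : Fin n, (Finset.univ.filter fun j => owner j = i).card = k
  zeroVal : ∀ (i : Fin n) (j : Fin (n*k)), owner j ≠ i →
      C.ival i (c j.castSucc) (c j.succ) = 0

/-- The `j`-th owned piece, as a set. -/
def XkWitness.pieceSet {n k : ℕ} {C : CakeInstance n} (W : XkWitness C k)
    (j : Fin (n*k)) : Set ℝ :=
  Set.Icc (W.c j.castSucc) (W.c j.succ)

/-- Value of player `i` for the `j`-th owned piece. -/
noncomputable def XkWitness.pieceVal {n k : ℕ} {C : CakeInstance n} (W : XkWitness C k)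
    (i : Fin n) (j : Fin (n*k)) : ℝ :=
  C.ival i (W.c j.castSucc) (W.c j.succ)

/-- A `k`-piece allocation gives each player exactly the pieces he owns:
every owned piece occurs among its owner's allocated intervals. -/
def XkWitness.givesOwnedPieces {n k : ℕ} {C : CakeInstance n} (W : XkWitness C k)
    (A : KPieceAlloc n k) : Prop :=
  ∀ j : Fin (n*k), ∃ m : Fin k,
    A.lo (W.owner j) m = W.c j.castSucc ∧ A.hi (W.owner j) m = W.c j.succ

/-
Fix a player `i` and let `c i` be the number of cuts of an envy-free allocation that fall strictly
inside pieces owned by `i`. The `k` owned pieces carry all of `i`'s value `1`, and together they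
meet at most `k + c i` intervals of the allocation, each worth at most `v i := V_i(A_i)` to `i` by
envy-freeness; hence `1 ≤ (k + c i) v i`. The pieces have disjoint interiors and the cut `0` lies in
none of them, so `∑ c i ≤ n`. Since `p ↦ 1/p` lies above its tangent at `p = k + 1`, summing gives
`∑ v i ≥ n/(k+1) ≥ n/(k+2)`.
-/

open scoped Finset

theorem Fin.sum_succ_sub_castSucc {M : Type*} [AddCommGroup M] {m : ℕ} (f : Fin (m + 1) → M) :
    ∑ t : Fin m, (f t.succ - f t.castSucc) = f (Fin.last m) - f 0 := by
  induction m with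
  | zero => simp
  | succ m ih =>
    rw [Fin.sum_univ_castSucc]
    simp only [Fin.succ_castSucc]
    rw [ih (fun t => f t.castSucc), Fin.succ_last, Fin.castSucc_zero]
    abel

theorem Monotone.eq_of_mem_Ioo_of_mem_Ioo {β : Type*} [Preorder β] {N : ℕ} {c : Fin (N + 1) → β}
    (hc : Monotone c) {j j' : Fin N} {z : β} (hz : z ∈ Ioo (c j.castSucc) (c j.succ))
    (hz' : z ∈ Ioo (c j'.castSucc) (c j'.succ)) : j = j' := by
  have key : ∀ {j j' : Fin N}, j < j' → c j.succ ≤ c j'.castSucc := fun h =>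
    hc (Fin.succ_le_castSucc_iff.mpr h)
  rcases lt_trichotomy j j' with h | h | h
  · exact absurd ((hz.2.trans_le (key h)).trans hz'.1) (lt_irrefl z)
  · exact h
  · exact absurd ((hz'.2.trans_le (key h)).trans hz.1) (lt_irrefl z)

theorem card_meeting_le {m : ℕ} {x : Fin (m + 1) → ℝ} (hx : Monotone x) (a b : ℝ) :
    #{t : Fin m | x t.castSucc < b ∧ a < x t.succ} ≤ #{s | x s ∈ Ioo a b} + 1 := by
  set T : Finset (Fin m) := {t | x t.castSucc < b ∧ a < x t.succ}
  rcases T.eq_empty_or_nonempty with hT | hT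
  · simp [hT]
  set t₀ := T.min' hT
  have ht₀ : t₀ ∈ T := T.min'_mem hT
  -- every interval meeting `(a, b)` after the first one starts at a cut inside `(a, b)`
  have hcast : #(T.erase t₀) ≤ #{s | x s ∈ Ioo a b} := by
    refine Finset.card_le_card_of_injOn Fin.castSucc (fun t ht => ?_)
      (Fin.castSucc_injective m).injOn
    obtain ⟨hne, htT⟩ := Finset.mem_erase.mp ht
    have hlt : t₀ < t := lt_of_le_of_ne (T.min'_le t htT) (Ne.symm hne)
    rw [Finset.mem_filter] at htT ht₀
    rw [Finset.mem_coe, Finset.mem_filter]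
    exact ⟨Finset.mem_univ _, ht₀.2.2.trans_le (hx (Fin.succ_le_castSucc_iff.mpr hlt)), htT.2.1⟩
  rw [← Finset.card_erase_add_one ht₀]
  omega

theorem sum_card_filter_mem_Ioo_le {N M : ℕ} {c : Fin (N + 1) → ℝ} (hc : Monotone c)
    {x : Fin (M + 1) → ℝ} (hx : x 0 ≤ c 0) :
    ∑ j : Fin N, #{s | x s ∈ Ioo (c j.castSucc) (c j.succ)} ≤ M := by
  set S : Fin N → Finset (Fin (M + 1)) := fun j => {s | x s ∈ Ioo (c j.castSucc) (c j.succ)}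
  have hdisj : (↑(Finset.univ : Finset (Fin N)) : Set (Fin N)).PairwiseDisjoint S :=
    fun j _ j' _ hne => Finset.disjoint_left.mpr fun s hs hs' =>
      hne (hc.eq_of_mem_Ioo_of_mem_Ioo (Finset.mem_filter.mp hs).2 (Finset.mem_filter.mp hs').2)
  calc _ = #(Finset.univ.biUnion S) := (Finset.card_biUnion hdisj).symm
    _ ≤ #(Finset.univ.erase (0 : Fin (M + 1))) := by
        refine Finset.card_le_card fun s hs => Finset.mem_erase.mpr ⟨?_, Finset.mem_univ s⟩
        rintro rfl
        obtain ⟨j, -, hj⟩ := Finset.mem_biUnion.mp hs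
        have hlt := (Finset.mem_filter.mp hj).2.1
        linarith [hc (Fin.zero_le j.castSucc)]
    _ = M := by simp

theorem two_mul_sub_div_sq_le {p q v : ℝ} (hq : 0 < q) (hv : 0 ≤ v) (h : 1 ≤ p * v) :
    (2 * q - p) / q ^ 2 ≤ v := by
  rw [div_le_iff₀ (by positivity)]
  rcases le_total (2 * q - p) 0 with hneg | hpos
  · nlinarith
  · nlinarith [mul_le_mul_of_nonneg_left h hpos, mul_nonneg hv (sq_nonneg (q - p))]

theorem card_div_le_sum_of_one_le_mul {ι : Type*} (s : Finset ι) {p v : ι → ℝ} {q : ℝ}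
    (hq : 0 < q) (hv : ∀ i ∈ s, 0 ≤ v i) (h : ∀ i ∈ s, 1 ≤ p i * v i)
    (hp : ∑ i ∈ s, p i ≤ #s * q) : #s / q ≤ ∑ i ∈ s, v i :=
  calc (#s : ℝ) / q = (2 * (#s * q) - #s * q) / q ^ 2 := by field_simp; ring
    _ ≤ (2 * (#s * q) - ∑ i ∈ s, p i) / q ^ 2 := by gcongr
    _ = ∑ i ∈ s, (2 * q - p i) / q ^ 2 := by
        rw [← Finset.sum_div, Finset.sum_sub_distrib, ← Finset.mul_sum, Finset.sum_const,
          nsmul_eq_mul]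
    _ ≤ ∑ i ∈ s, v i := Finset.sum_le_sum fun i hi => two_mul_sub_div_sq_le hq (hv i hi) (h i hi)

namespace CakeInstance

variable {n : ℕ} (C : CakeInstance n) (i : Fin n)

theorem intervalIntegrable {a b : ℝ} (ha : a ∈ Icc (0 : ℝ) 1) (hb : b ∈ Icc (0 : ℝ) 1) :
    IntervalIntegrable (C.d i) volume a b :=
  ((C.cont i).mono (uIcc_subset_Icc ha hb)).intervalIntegrable

theorem ival_nonneg {a b : ℝ} (ha : 0 ≤ a) (hab : a ≤ b) (hb : b ≤ 1) : 0 ≤ C.ival i a b :=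
  intervalIntegral.integral_nonneg hab fun _ hz => C.nonneg i _ ⟨ha.trans hz.1, hz.2.trans hb⟩

theorem ival_eq_sub {a b : ℝ} (ha : a ∈ Icc (0 : ℝ) 1) (hb : b ∈ Icc (0 : ℝ) 1) :
    C.ival i a b = C.ival i 0 b - C.ival i 0 a :=
  (intervalIntegral.integral_interval_sub_left
    (C.intervalIntegrable i (left_mem_Icc.mpr zero_le_one) hb)
    (C.intervalIntegrable i (left_mem_Icc.mpr zero_le_one) ha)).symm

theorem ival_le_ival {a a' b' b : ℝ} (ha : 0 ≤ a) (haa' : a ≤ a') (ha'b' : a' ≤ b')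
    (hb'b : b' ≤ b) (hb : b ≤ 1) : C.ival i a' b' ≤ C.ival i a b := by
  have hleft := C.ival_nonneg i ha haa' (by linarith)
  have hright := C.ival_nonneg i (by linarith) hb'b hb
  have ha : a ∈ Icc (0 : ℝ) 1 := ⟨ha, by linarith⟩
  have ha' : a' ∈ Icc (0 : ℝ) 1 := ⟨by linarith, by linarith⟩
  have hb' : b' ∈ Icc (0 : ℝ) 1 := ⟨by linarith, by linarith⟩
  have hb : b ∈ Icc (0 : ℝ) 1 := ⟨by linarith, hb⟩
  rw [C.ival_eq_sub i ha ha'] at hleft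
  rw [C.ival_eq_sub i hb' hb] at hright
  rw [C.ival_eq_sub i ha hb, C.ival_eq_sub i ha' hb']
  linarith

theorem sum_ival {m : ℕ} (g : Fin (m + 1) → ℝ) (hg : ∀ t, g t ∈ Icc (0 : ℝ) 1) :
    ∑ t : Fin m, C.ival i (g t.castSucc) (g t.succ) = C.ival i (g 0) (g (Fin.last m)) := by
  simp only [C.ival_eq_sub i (hg _) (hg _)]
  exact Fin.sum_succ_sub_castSucc fun t => C.ival i 0 (g t)

end CakeInstance

namespace ContigAlloc

variable {n : ℕ} (A : ContigAlloc n)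

theorem x_mem_Icc (s : Fin (n + 1)) : A.x s ∈ Icc (0 : ℝ) 1 :=
  ⟨A.first ▸ A.mono (Fin.zero_le s), A.last ▸ A.mono (Fin.le_last s)⟩

theorem ival_le_sum_meeting (C : CakeInstance n) (i : Fin n) {a b : ℝ} (ha : 0 ≤ a)
    (hab : a ≤ b) (hb : b ≤ 1) :
    C.ival i a b ≤ ∑ t : Fin n with A.x t.castSucc < b ∧ a < A.x t.succ,
      C.ival i (A.x t.castSucc) (A.x t.succ) := by
  -- clamp the cuts to `[a, b]`: intervals not meeting `(a, b)` collapse to a point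
  set y : Fin (n + 1) → ℝ := fun s => max a (min b (A.x s))
  have hy : ∀ s, y s ∈ Icc (0 : ℝ) 1 := fun s =>
    ⟨ha.trans (le_max_left _ _), max_le (hab.trans hb) ((min_le_left _ _).trans hb)⟩
  have hy0 : y 0 = a := by simp [y, A.first, ha]
  have hylast : y (Fin.last n) = b := by simp [y, A.last, hb, hab]
  have hstep : ∀ t : Fin n, A.x t.castSucc ≤ A.x t.succ := fun t => A.mono t.castSucc_le_succ
  calc C.ival i a b = ∑ t : Fin n, C.ival i (y t.castSucc) (y t.succ) := by
        rw [C.sum_ival i y hy, hy0, hylast]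
    _ ≤ ∑ t : Fin n, if A.x t.castSucc < b ∧ a < A.x t.succ then
          C.ival i (A.x t.castSucc) (A.x t.succ) else 0 := by
        refine Finset.sum_le_sum fun t _ => ?_
        split_ifs with hmeet
        · exact C.ival_le_ival i (A.x_mem_Icc _).1 (le_max_of_le_right (le_min hmeet.1.le le_rfl))
            (max_le_max le_rfl (min_le_min le_rfl (hstep t))) (max_le hmeet.2.le (min_le_right _ _))
            (A.x_mem_Icc _).2
        · have hflat : y t.castSucc = y t.succ := by
            rcases not_and_or.mp hmeet with h | h <;> rw [not_lt] at h
            · simp only [y, min_eq_left h, min_eq_left (h.trans (hstep t))]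
            · simp only [y, max_eq_left ((min_le_right _ _).trans h),
                max_eq_left ((min_le_right _ _).trans ((hstep t).trans h))]
          simp [hflat, CakeInstance.ival]
    _ = _ := (Finset.sum_filter _ _).symm

end ContigAlloc

theorem cval_nonneg {n : ℕ} (C : CakeInstance n) (A : ContigAlloc n) (i j : Fin n) :
    0 ≤ cval C A i j :=
  C.ival_nonneg i (A.x_mem_Icc _).1 (A.mono (Fin.castSucc_le_succ _)) (A.x_mem_Icc _).2

section EnvyFree

variable {n : ℕ} {C : CakeInstance n} {A : ContigAlloc n}

theorem cEnvyFree.ival_le (hA : cEnvyFree C A) (i t : Fin n) :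
    C.ival i (A.x t.castSucc) (A.x t.succ) ≤ cval C A i i := by
  simpa [cval] using hA i (A.σ t)

theorem cEnvyFree.ival_le_mul_cval (hA : cEnvyFree C A) (i : Fin n) {a b : ℝ} (ha : 0 ≤ a)
    (hab : a ≤ b) (hb : b ≤ 1) :
    C.ival i a b ≤ (#{s | A.x s ∈ Ioo a b} + 1) * cval C A i i :=
  calc C.ival i a b ≤ ∑ t : Fin n with A.x t.castSucc < b ∧ a < A.x t.succ,
        C.ival i (A.x t.castSucc) (A.x t.succ) := A.ival_le_sum_meeting C i ha hab hb
    _ ≤ #{t : Fin n | A.x t.castSucc < b ∧ a < A.x t.succ} • cval C A i i :=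
        Finset.sum_le_card_nsmul _ _ _ fun t _ => hA.ival_le i t
    _ ≤ _ := by
        rw [nsmul_eq_mul]
        gcongr
        · exact cval_nonneg C A i i
        · exact_mod_cast card_meeting_le A.mono a b

end EnvyFree

namespace XkWitness

variable {n k : ℕ} {C : CakeInstance n} (W : XkWitness C k)

theorem c_mem_Icc (j : Fin (n * k + 1)) : W.c j ∈ Icc (0 : ℝ) 1 :=
  ⟨W.first ▸ W.mono.monotone (Fin.zero_le j), W.last ▸ W.mono.monotone (Fin.le_last j)⟩

theorem sum_pieceVal_owned (i : Fin n) : ∑ j with W.owner j = i, W.pieceVal i j = 1 :=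
  calc _ = ∑ j, W.pieceVal i j :=
        Finset.sum_filter_of_ne fun j _ h => not_imp_comm.mp (W.zeroVal i j) h
    _ = C.ival i 0 1 := by rw [← W.first, ← W.last]; exact C.sum_ival i W.c W.c_mem_Icc
    _ = 1 := C.total i

noncomputable def ownCuts (A : ContigAlloc n) (i : Fin n) : ℕ :=
  ∑ j with W.owner j = i, #{s | A.x s ∈ Ioo (W.c j.castSucc) (W.c j.succ)}

theorem sum_ownCuts_le (A : ContigAlloc n) : ∑ i, W.ownCuts A i ≤ n := by
  unfold ownCuts
  rw [Finset.sum_fiberwise]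
  exact sum_card_filter_mem_Ioo_le W.mono.monotone (by rw [A.first, W.first])

theorem one_le_mul_cval {A : ContigAlloc n} (hA : cEnvyFree C A) (i : Fin n) :
    1 ≤ (k + W.ownCuts A i) * cval C A i i :=
  calc (1 : ℝ) = ∑ j with W.owner j = i, W.pieceVal i j := (W.sum_pieceVal_owned i).symm
    _ ≤ ∑ j with W.owner j = i,
          ((#{s | A.x s ∈ Ioo (W.c j.castSucc) (W.c j.succ)} : ℝ) + 1) * cval C A i i :=
        Finset.sum_le_sum fun j _ => hA.ival_le_mul_cval i (W.c_mem_Icc _).1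
          (W.mono.monotone j.castSucc_le_succ) (W.c_mem_Icc _).2
    _ = (k + W.ownCuts A i) * cval C A i i := by
        rw [← Finset.sum_mul, Finset.sum_add_distrib, Finset.sum_const, W.ownCount]
        unfold ownCuts
        push_cast
        ring

end XkWitness

theorem optimal_ef_welfare_lower_bound_general (n k : ℕ)
    (C : CakeInstance n) (W : XkWitness C k)
    (A : ContigAlloc n) (hA : cEnvyFree C A) :
    (n:ℝ) / ((k:ℝ) + 2) ≤ cWelfare C A := by
  have hcuts : ∑ i, ((k : ℝ) + W.ownCuts A i) ≤ #(Finset.univ : Finset (Fin n)) * (k + 1) := by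
    have : (∑ i, W.ownCuts A i : ℝ) ≤ n := by exact_mod_cast W.sum_ownCuts_le A
    simp only [Finset.sum_add_distrib, Finset.sum_const, Finset.card_univ, Fintype.card_fin,
      nsmul_eq_mul]
    linarith
  calc (n : ℝ) / (k + 2) ≤ #(Finset.univ : Finset (Fin n)) / (k + 1) := by
        rw [Finset.card_univ, Fintype.card_fin]
        gcongr
        linarith
    _ ≤ cWelfare C A := card_div_le_sum_of_one_le_mul _ (by positivity)
        (fun i _ => cval_nonneg C A i i) (fun i _ => W.one_le_mul_cval hA i) hcuts

/-- For `1 ≤ k < n` and an instance in `X(k)`, every envy-free contiguous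
allocation of maximal utilitarian welfare (among envy-free contiguous allocations) has
utilitarian welfare at least `n/(k+2)`. -/
theorem optimal_ef_welfare_lower_bound (n k : ℕ) (hk : 1 ≤ k) (hkn : k < n)
    (C : CakeInstance n) (W : XkWitness C k)
    (A : ContigAlloc n) (hA : cEnvyFree C A)
    (hopt : ∀ B : ContigAlloc n, cEnvyFree C B → cWelfare C B ≤ cWelfare C A) :
    (n:ℝ) / ((k:ℝ) + 2) ≤ cWelfare C A :=
  optimal_ef_welfare_lower_bound_general n k C W A hA
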